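/- arXiv:1809.05563 — 2 statements merged into one kernel-verified Lean document; each statement's English description precedes it below -/
import Mathlib

section
/- Let β ≥ β₀ > 0, K₁ > 0, and let F : ℝ → ℝ be measurable with |F(x)| ≤ K₁ e^{β₀|x|} for all x ∈ ℝ. Then for every t > 0, sup_{y∈ℝ} e^{−β|y|} |∫_ℝ p_t(y−x) F(x) dx| ≤ 2 K₁ e^{β₀² t / 2}. -/
open MeasureTheory Real

/-- The one-dimensional heat (Gaussian) kernel `p_t(x) = (2πt)^{-1/2} exp(-x²/(2t))`. -/
noncomputable def heatKernel (t x : ℝ) : ℝ :=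
  (Real.sqrt (2 * Real.pi * t))⁻¹ * Real.exp (-(x ^ 2) / (2 * t))

/-!
`∫ p_t(y - x) F(x) dx` is the expectation of `F` under the Gaussian law `N(y, t)`. Bounding
`e^{β₀|x|} ≤ 2 cosh(β₀ x)`, the moment generating function of `N(y, t)` gives
`E[2 cosh(β₀ X)] = 2 cosh(β₀ y) e^{β₀² t / 2}`, and `cosh(β₀ y) ≤ e^{β₀|y|} ≤ e^{β|y|}`.
-/

open ProbabilityTheory NNReal

lemma exp_mul_abs_le_two_mul_cosh (b x : ℝ) : exp (b * |x|) ≤ 2 * cosh (b * x) :=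
  calc exp (b * |x|) ≤ exp |b * x| :=
        exp_le_exp.2 <| abs_mul b x ▸ mul_le_mul_of_nonneg_right (le_abs_self b) (abs_nonneg x)
    _ ≤ 2 * cosh (b * x) := by rw [cosh_eq]; linarith [exp_abs_le (b * x)]

lemma cosh_le_exp_abs (x : ℝ) : cosh x ≤ exp |x| := by
  rw [← cosh_abs, cosh_eq]
  linarith [exp_le_exp.2 (neg_le_self (abs_nonneg x))]

lemma heatKernel_sub_eq_gaussianPDFReal (t : ℝ≥0) (y x : ℝ) :
    heatKernel t (y - x) = gaussianPDFReal y t x := by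
  rw [heatKernel, gaussianPDFReal, ← neg_sub x y, neg_sq]

lemma integral_heatKernel_sub_mul {t : ℝ≥0} (ht : t ≠ 0) (y : ℝ) (g : ℝ → ℝ) :
    ∫ x, heatKernel t (y - x) * g x = ∫ x, g x ∂gaussianReal y t := by
  simp only [integral_gaussianReal_eq_integral_smul ht, heatKernel_sub_eq_gaussianPDFReal,
    smul_eq_mul]

variable {μ : ℝ} {v : ℝ≥0}

lemma integrable_cosh_mul_gaussianReal (b : ℝ) :
    Integrable (fun x ↦ cosh (b * x)) (gaussianReal μ v) := by
  simp only [cosh_eq, ← neg_mul]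
  exact ((integrable_exp_mul_gaussianReal b).add (integrable_exp_mul_gaussianReal (-b))).div_const 2

lemma integral_cosh_mul_gaussianReal (b : ℝ) :
    ∫ x, cosh (b * x) ∂gaussianReal μ v = cosh (μ * b) * exp (b ^ 2 * v / 2) := by
  rw [mul_comm (b ^ 2)]
  have hmgf := congrFun (mgf_id_gaussianReal (μ := μ) (v := v))
  simp only [mgf, id] at hmgf
  simp only [cosh_eq, ← neg_mul, integral_div, integral_add (integrable_exp_mul_gaussianReal b)
    (integrable_exp_mul_gaussianReal (-b)), hmgf, mul_neg, neg_sq, exp_add]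
  ring

lemma abs_integral_gaussianReal_le {F : ℝ → ℝ} {K b : ℝ} (hK : 0 ≤ K)
    (hF : ∀ x, |F x| ≤ K * exp (b * |x|)) :
    |∫ x, F x ∂gaussianReal μ v| ≤ 2 * K * cosh (μ * b) * exp (b ^ 2 * v / 2) := by
  have hbound : ∀ x, ‖F x‖ ≤ 2 * K * cosh (b * x) := fun x ↦
    calc ‖F x‖ ≤ K * exp (b * |x|) := hF x
      _ ≤ K * (2 * cosh (b * x)) := by gcongr; exact exp_mul_abs_le_two_mul_cosh b x
      _ = 2 * K * cosh (b * x) := by ring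
  calc |∫ x, F x ∂gaussianReal μ v|
      ≤ ∫ x, 2 * K * cosh (b * x) ∂gaussianReal μ v :=
        norm_integral_le_of_norm_le ((integrable_cosh_mul_gaussianReal b).const_mul _)
          (.of_forall hbound)
    _ = 2 * K * cosh (μ * b) * exp (b ^ 2 * v / 2) := by
        rw [integral_const_mul, integral_cosh_mul_gaussianReal, mul_assoc (2 * K)]

theorem heatKernel_conv_sup_le_general (β β₀ K₁ : ℝ) (hβ₀ : 0 < β₀) (hβ : β₀ ≤ β) (hK₁ : 0 < K₁)
    (F : ℝ → ℝ)
    (hF : ∀ x : ℝ, |F x| ≤ K₁ * Real.exp (β₀ * |x|)) (t : ℝ) (ht : 0 < t) :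
    (⨆ y : ℝ, Real.exp (-β * |y|) * |∫ x : ℝ, heatKernel t (y - x) * F x|) ≤
      2 * K₁ * Real.exp (β₀ ^ 2 * t / 2) := by
  lift t to ℝ≥0 using ht.le
  refine ciSup_le fun y ↦ ?_
  have hconv := abs_integral_gaussianReal_le (μ := y) (v := t) hK₁.le hF
  rw [← integral_heatKernel_sub_mul (by exact_mod_cast ht.ne') y F] at hconv
  have hcosh : cosh (y * β₀) ≤ exp (β * |y|) :=
    calc cosh (y * β₀) ≤ exp (β₀ * |y|) := by
          simpa [abs_mul, abs_of_pos hβ₀, mul_comm] using cosh_le_exp_abs (y * β₀)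
      _ ≤ exp (β * |y|) := exp_le_exp.2 (mul_le_mul_of_nonneg_right hβ (abs_nonneg y))
  calc exp (-β * |y|) * |∫ x, heatKernel t (y - x) * F x|
      ≤ exp (-β * |y|) * (2 * K₁ * exp (β * |y|) * exp (β₀ ^ 2 * t / 2)) := by
        gcongr
        exact hconv.trans (by gcongr)
    _ = 2 * K₁ * exp (β₀ ^ 2 * t / 2) * (exp (-β * |y|) * exp (β * |y|)) := by ring
    _ = 2 * K₁ * exp (β₀ ^ 2 * t / 2) := by
        rw [← exp_add, neg_mul, neg_add_cancel, exp_zero, mul_one]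

/-- Let `β ≥ β₀ > 0`, `K₁ > 0` and let `F : ℝ → ℝ` be measurable with
`|F x| ≤ K₁ e^{β₀ |x|}` for all `x`.  Then for every `t > 0`,
`sup_{y ∈ ℝ} e^{-β |y|} |∫_ℝ p_t(y - x) F x dx| ≤ 2 K₁ e^{β₀² t / 2}`. -/
theorem heatKernel_conv_sup_le (β β₀ K₁ : ℝ) (hβ₀ : 0 < β₀) (hβ : β₀ ≤ β) (hK₁ : 0 < K₁)
    (F : ℝ → ℝ) (hFmeas : Measurable F)
    (hF : ∀ x : ℝ, |F x| ≤ K₁ * Real.exp (β₀ * |x|)) (t : ℝ) (ht : 0 < t) :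
    (⨆ y : ℝ, Real.exp (-β * |y|) * |∫ x : ℝ, heatKernel t (y - x) * F x|) ≤
      2 * K₁ * Real.exp (β₀ ^ 2 * t / 2) :=
  heatKernel_conv_sup_le_general β β₀ K₁ hβ₀ hβ hK₁ F hF t ht
end

section
/- For every β₁ > 0, T > 0 and α ∈ (0, 1/2) there exists a constant K = K(β₁, T, α) such that for all 0 < t₂ ≤ t₁ ≤ T and all y ∈ ℝ, ∫_0^{t₂} ∫_ℝ |p_{t₁−s}(y−x) − p_{t₂−s}(y−x)|² e^{2β₁|x|} dx ds ≤ K e^{2β₁|y|} (t₁ − t₂)^{α}. -/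
/-!
Two facts drive the estimate. First, the exponential weight is harmless against Gaussian decay:
`e^{2β|x|} ≤ e^{2β|y|} e^{2β|y-x|}` and `2β|u| ≤ 2β²/c + (c/2)u²`, so a factor `e^{-c(y-x)²}` pays
for the weight at the price of `e^{2β|y| + 2β²/c}` and half of its rate.

Second, with `a = t₁ - s`, `b = t₂ - s` and `δ = a - b`, the weighted `L²` distance of `p_a` and
`p_b` is `O(b^{-1/2})` from the size of each kernel, and `O(δ² b^{-5/2})` when `δ ≤ b`, by the mean
value theorem and `|∂ₜ p_t(x)| ≲ t^{-3/2} e^{-x²/(4t)}`. Interpolating the two bounds gives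
`O(δ^α b^{-1/2-α})` for `0 ≤ α ≤ 2`, and `b^{-1/2-α}` is integrable in `s ∈ (0, t₂)` exactly when
`α < 1/2`.
-/

open MeasureTheory Real

section WeightedGaussian

variable {β c : ℝ} (y : ℝ)

lemma exp_neg_sq_mul_exp_abs_le (hβ : 0 ≤ β) (hc : 0 < c) (x : ℝ) :
    exp (-c * (y - x) ^ 2) * exp (2 * β * |x|) ≤
      exp (2 * β * |y| + 2 * β ^ 2 / c) * exp (-(c / 2) * (y - x) ^ 2) := by
  rw [← exp_add, ← exp_add, exp_le_exp]
  have htri : |x| ≤ |y| + |y - x| := by simpa using abs_sub y (y - x)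
  have hsq : 2 * β * |y - x| ≤ 2 * β ^ 2 / c + c / 2 * |y - x| ^ 2 := by
    rw [div_add' _ _ _ hc.ne', le_div_iff₀ hc]
    nlinarith [sq_nonneg (c * |y - x| - 2 * β)]
  rw [sq_abs] at hsq
  nlinarith

lemma integrable_exp_neg_sq_mul_exp_abs (hβ : 0 ≤ β) (hc : 0 < c) :
    Integrable fun x => exp (-c * (y - x) ^ 2) * exp (2 * β * |x|) := by
  refine (((integrable_exp_neg_mul_sq (half_pos hc)).comp_sub_left y).const_mul
    (exp (2 * β * |y| + 2 * β ^ 2 / c))).mono' (by fun_prop) (.of_forall fun x => ?_)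
  rw [norm_of_nonneg (by positivity)]
  exact exp_neg_sq_mul_exp_abs_le y hβ hc x

lemma integral_exp_neg_sq_mul_exp_abs_le (hβ : 0 ≤ β) (hc : 0 < c) :
    ∫ x, exp (-c * (y - x) ^ 2) * exp (2 * β * |x|) ≤
      exp (2 * β * |y| + 2 * β ^ 2 / c) * sqrt (2 * π / c) := by
  have hg := (integrable_exp_neg_mul_sq (half_pos hc)).comp_sub_left y
  calc ∫ x, exp (-c * (y - x) ^ 2) * exp (2 * β * |x|)
      ≤ ∫ x, exp (2 * β * |y| + 2 * β ^ 2 / c) * exp (-(c / 2) * (y - x) ^ 2) :=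
        integral_mono (integrable_exp_neg_sq_mul_exp_abs y hβ hc) (hg.const_mul _)
          (exp_neg_sq_mul_exp_abs_le y hβ hc)
    _ = exp (2 * β * |y| + 2 * β ^ 2 / c) * sqrt (2 * π / c) := by
        rw [integral_const_mul, integral_sub_left_eq_self (fun x => exp (-(c / 2) * x ^ 2)),
          integral_gaussian, div_div_eq_mul_div, mul_comm π]

end WeightedGaussian

section HeatKernel

variable {t : ℝ} (x : ℝ)

lemma heatKernel_nonneg : 0 ≤ heatKernel t x := by
  unfold heatKernel; positivity

lemma heatKernel_sq (ht : 0 < t) :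
    heatKernel t x ^ 2 = (2 * π * t)⁻¹ * exp (-t⁻¹ * x ^ 2) := by
  rw [heatKernel, mul_pow, inv_pow, sq_sqrt (by positivity), ← exp_nat_mul]
  congr 2
  field_simp
  ring

lemma hasDerivAt_heatKernel (ht : 0 < t) :
    HasDerivAt (fun t => heatKernel t x)
      (heatKernel t x * (x ^ 2 / (2 * t ^ 2) - 1 / (2 * t))) t := by
  have h2πt : 0 < 2 * π * t := by positivity
  have hsqrt : HasDerivAt (fun s => (sqrt (2 * π * s))⁻¹)
      (-(2 * π / (2 * sqrt (2 * π * t))) / sqrt (2 * π * t) ^ 2) t := by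
    have h := ((hasDerivAt_id t).const_mul (2 * π)).sqrt (by simpa using h2πt.ne')
    refine ((hasDerivAt_inv (sqrt_pos.2 h2πt).ne').comp t h).congr_deriv ?_
    simp only [id, mul_one]
    ring
  have hexp : HasDerivAt (fun s => exp (-(x ^ 2) / (2 * s)))
      (exp (-(x ^ 2) / (2 * t)) * (x ^ 2 / (2 * t ^ 2))) t := by
    have h := ((hasDerivAt_inv ht.ne').const_mul (-(x ^ 2) / 2)).exp
    simpa only [mul_neg, neg_div, ← div_eq_mul_inv, div_div, neg_neg] using h
  refine (hsqrt.mul hexp).congr_deriv ?_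
  unfold heatKernel
  rw [sq_sqrt h2πt.le]
  field_simp
  ring

lemma abs_deriv_heatKernel_le (ht : 0 < t) :
    |deriv (fun t => heatKernel t x) t| ≤
      2 * t⁻¹ * (sqrt (2 * π * t))⁻¹ * exp (-(x ^ 2 / (4 * t))) := by
  set v := x ^ 2 / (4 * t)
  have hv : 0 ≤ v := by positivity
  have hfactor : |x ^ 2 / (2 * t ^ 2) - 1 / (2 * t)| ≤ (4 * v + 1) / (2 * t) := by
    rw [abs_le]
    constructor <;> · simp only [v]; field_simp; nlinarith [sq_nonneg x]
  -- `1 + v ≤ exp v` absorbs the polynomial factor into half of the Gaussian decay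
  have hdecay : (4 * v + 1) * exp (-(2 * v)) ≤ 4 * exp (-v) := by
    have h := add_one_le_exp v
    have hsplit : exp (-v) = exp v * exp (-(2 * v)) := by rw [← exp_add]; ring_nf
    rw [hsplit]
    nlinarith [exp_pos (-(2 * v))]
  have hkernel : heatKernel t x = (sqrt (2 * π * t))⁻¹ * exp (-(2 * v)) := by
    rw [heatKernel]; congr 2; simp only [v]; field_simp; ring
  rw [(hasDerivAt_heatKernel x ht).deriv, abs_mul, abs_of_nonneg (heatKernel_nonneg x), hkernel]
  calc (sqrt (2 * π * t))⁻¹ * exp (-(2 * v)) * |x ^ 2 / (2 * t ^ 2) - 1 / (2 * t)|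
      ≤ (sqrt (2 * π * t))⁻¹ * exp (-(2 * v)) * ((4 * v + 1) / (2 * t)) := by gcongr
    _ = (sqrt (2 * π * t))⁻¹ * (2 * t)⁻¹ * ((4 * v + 1) * exp (-(2 * v))) := by ring
    _ ≤ (sqrt (2 * π * t))⁻¹ * (2 * t)⁻¹ * (4 * exp (-v)) := by gcongr
    _ = 2 * t⁻¹ * (sqrt (2 * π * t))⁻¹ * exp (-v) := by field_simp; ring

lemma abs_heatKernel_sub_le {a b : ℝ} (hb : 0 < b) (hba : b ≤ a) (hab : a ≤ 2 * b) :
    |heatKernel a x - heatKernel b x| ≤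
      (a - b) * (2 * b⁻¹ * (sqrt (2 * π * b))⁻¹ * exp (-(x ^ 2 / (8 * b)))) := by
  have hderiv : ∀ t ∈ Set.Ico b a, ‖deriv (fun t => heatKernel t x) t‖ ≤
        2 * b⁻¹ * (sqrt (2 * π * b))⁻¹ * exp (-(x ^ 2 / (8 * b))) := fun t ht => by
    have htb : b ≤ t := ht.1
    have hexp : exp (-(x ^ 2 / (4 * t))) ≤ exp (-(x ^ 2 / (8 * b))) := by
      gcongr exp (-(x ^ 2 / ?_))
      all_goals linarith [ht.2]
    refine (abs_deriv_heatKernel_le x (hb.trans_le htb)).trans ?_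
    gcongr
  have h := norm_image_sub_le_of_norm_deriv_le_segment' (f := fun t => heatKernel t x)
    (fun t ht =>
      (hasDerivAt_heatKernel x (hb.trans_le ht.1)).differentiableAt.hasDerivAt.hasDerivWithinAt)
    hderiv a ⟨hba, le_rfl⟩
  rwa [mul_comm] at h

lemma sq_heatKernel_sub_le {a b : ℝ} (hb : 0 < b) (hba : b ≤ a) (hab : a ≤ 2 * b) :
    (heatKernel a x - heatKernel b x) ^ 2 ≤
      (a - b) ^ 2 * (4 * b⁻¹ ^ 2 * (2 * π * b)⁻¹) * exp (-(4 * b)⁻¹ * x ^ 2) := by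
  have h := abs_heatKernel_sub_le x hb hba hab
  calc (heatKernel a x - heatKernel b x) ^ 2
      ≤ ((a - b) * (2 * b⁻¹ * (sqrt (2 * π * b))⁻¹ * exp (-(x ^ 2 / (8 * b))))) ^ 2 := by
        rw [← sq_abs]; gcongr
    _ = _ := by
        have hexp : exp (-(x ^ 2 / (8 * b))) ^ 2 = exp (-(4 * b)⁻¹ * x ^ 2) := by
          rw [← exp_nat_mul]; congr 1; field_simp; ring
        have hsqrt : (sqrt (2 * π * b))⁻¹ ^ 2 = (2 * π * b)⁻¹ := by
          rw [inv_pow, sq_sqrt (by positivity)]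
        rw [← hexp, ← hsqrt]
        ring

end HeatKernel

section Interpolation

variable {b δ α : ℝ}

lemma rpow_neg_half_le_mul_rpow (hb : 0 < b) (hbδ : b ≤ δ) (hα : 0 ≤ α) :
    b ^ (-(1 / 2) : ℝ) ≤ δ ^ α * b ^ (-(1 / 2 + α)) := by
  rw [show (-(1 / 2) : ℝ) = α + -(1 / 2 + α) by ring, rpow_add hb]
  gcongr

lemma sq_mul_rpow_le_mul_rpow (hb : 0 < b) (hδ : 0 ≤ δ) (hδb : δ ≤ b) (hα : α ≤ 2) :
    δ ^ 2 * b ^ (-(5 / 2) : ℝ) ≤ δ ^ α * b ^ (-(1 / 2 + α)) := by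
  calc δ ^ 2 * b ^ (-(5 / 2) : ℝ) = δ ^ α * (δ ^ (2 - α) * b ^ (-(5 / 2) : ℝ)) := by
        rw [← mul_assoc, ← rpow_add' hδ (by norm_num), add_sub_cancel, rpow_two]
    _ ≤ δ ^ α * (b ^ (2 - α) * b ^ (-(5 / 2) : ℝ)) := by gcongr
    _ = δ ^ α * b ^ (-(1 / 2 + α)) := by rw [← rpow_add hb]; ring_nf

end Interpolation

section WeightedHeatKernel

variable {β : ℝ} (y : ℝ)

lemma integrable_heatKernel_sq_mul_exp_abs (hβ : 0 ≤ β) {t : ℝ} (ht : 0 < t) :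
    Integrable fun x => heatKernel t (y - x) ^ 2 * exp (2 * β * |x|) := by
  simp_rw [heatKernel_sq _ ht, mul_assoc ((2 * π * t)⁻¹)]
  exact (integrable_exp_neg_sq_mul_exp_abs y hβ (inv_pos.2 ht)).const_mul _

lemma integral_heatKernel_sq_mul_exp_abs_le (hβ : 0 ≤ β) {t : ℝ} (ht : 0 < t) :
    ∫ x, heatKernel t (y - x) ^ 2 * exp (2 * β * |x|) ≤
      exp (2 * β * |y| + 2 * β ^ 2 * t) * t ^ (-(1 / 2) : ℝ) := by
  simp_rw [heatKernel_sq _ ht, mul_assoc ((2 * π * t)⁻¹), integral_const_mul]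
  calc (2 * π * t)⁻¹ * ∫ x, exp (-t⁻¹ * (y - x) ^ 2) * exp (2 * β * |x|)
      ≤ (2 * π * t)⁻¹ * (exp (2 * β * |y| + 2 * β ^ 2 / t⁻¹) * sqrt (2 * π / t⁻¹)) := by
        gcongr
        exact integral_exp_neg_sq_mul_exp_abs_le y hβ (inv_pos.2 ht)
    _ = exp (2 * β * |y| + 2 * β ^ 2 * t) * (sqrt (2 * π) * sqrt t)⁻¹ := by
        rw [div_inv_eq_mul, div_inv_eq_mul, sqrt_mul (by positivity)]
        field_simp
        rw [sq_sqrt (by positivity), sq_sqrt ht.le]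
    _ ≤ exp (2 * β * |y| + 2 * β ^ 2 * t) * t ^ (-(1 / 2) : ℝ) := by
        rw [rpow_neg ht.le, ← sqrt_eq_rpow]
        gcongr
        exact le_mul_of_one_le_left (sqrt_nonneg t) (one_le_sqrt.2 (by linarith [two_le_pi]))

lemma integral_sq_heatKernel_sub_mul_exp_abs_le_of_le_two_mul (hβ : 0 ≤ β) {a b : ℝ}
    (hb : 0 < b) (hba : b ≤ a) (hab : a ≤ 2 * b) :
    ∫ x, (heatKernel a (y - x) - heatKernel b (y - x)) ^ 2 * exp (2 * β * |x|) ≤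
      8 * exp (2 * β * |y| + 8 * β ^ 2 * b) * (a - b) ^ 2 * b ^ (-(5 / 2) : ℝ) := by
  set A := (a - b) ^ 2 * (4 * b⁻¹ ^ 2 * (2 * π * b)⁻¹)
  have hc : 0 < (4 * b)⁻¹ := by positivity
  calc ∫ x, (heatKernel a (y - x) - heatKernel b (y - x)) ^ 2 * exp (2 * β * |x|)
      ≤ ∫ x, A * (exp (-(4 * b)⁻¹ * (y - x) ^ 2) * exp (2 * β * |x|)) :=
        integral_mono_of_nonneg (.of_forall fun x => by positivity)
          ((integrable_exp_neg_sq_mul_exp_abs y hβ hc).const_mul A)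
          (.of_forall fun x => by
            dsimp only
            rw [← mul_assoc]
            gcongr; exact sq_heatKernel_sub_le _ hb hba hab)
    _ ≤ A * (exp (2 * β * |y| + 2 * β ^ 2 / (4 * b)⁻¹) * sqrt (2 * π / (4 * b)⁻¹)) := by
        rw [integral_const_mul]
        gcongr
        exact integral_exp_neg_sq_mul_exp_abs_le y hβ hc
    _ = 8 * exp (2 * β * |y| + 8 * β ^ 2 * b) * (a - b) ^ 2 * b⁻¹ ^ 2 *
          (sqrt (2 * π) * sqrt b)⁻¹ := by
        have hsqrt : sqrt (2 * π / (4 * b)⁻¹) = 2 * (sqrt (2 * π) * sqrt b) := by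
          rw [← sqrt_mul (by positivity), ← sqrt_sq zero_le_two, ← sqrt_mul (by positivity)]
          congr 1
          field_simp
          ring
        rw [hsqrt, show 2 * β ^ 2 / (4 * b)⁻¹ = 8 * β ^ 2 * b by field_simp; ring]
        simp only [A]
        field_simp
        rw [sq_sqrt (by positivity), sq_sqrt hb.le]
        ring
    _ ≤ 8 * exp (2 * β * |y| + 8 * β ^ 2 * b) * (a - b) ^ 2 * b ^ (-(5 / 2) : ℝ) := by
        rw [show (-(5 / 2) : ℝ) = -2 + -(1 / 2) by norm_num, rpow_add hb, rpow_neg hb.le,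
          rpow_neg hb.le, ← sqrt_eq_rpow, rpow_two, inv_pow, ← mul_assoc]
        gcongr
        exact le_mul_of_one_le_left (sqrt_nonneg b) (one_le_sqrt.2 (by linarith [two_le_pi]))

lemma integral_sq_heatKernel_sub_mul_exp_abs_le (hβ : 0 ≤ β) {T a b : ℝ} (hb : 0 < b)
    (hba : b ≤ a) (haT : a ≤ T) :
    ∫ x, (heatKernel a (y - x) - heatKernel b (y - x)) ^ 2 * exp (2 * β * |x|) ≤
      2 * exp (2 * β * |y| + 2 * β ^ 2 * T) * b ^ (-(1 / 2) : ℝ) := by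
  have ha : 0 < a := hb.trans_le hba
  have hia := integrable_heatKernel_sq_mul_exp_abs y hβ ha
  have hib := integrable_heatKernel_sq_mul_exp_abs y hβ hb
  have hterm : ∀ t, b ≤ t → t ≤ T → exp (2 * β * |y| + 2 * β ^ 2 * t) * t ^ (-(1 / 2) : ℝ) ≤
      exp (2 * β * |y| + 2 * β ^ 2 * T) * b ^ (-(1 / 2) : ℝ) := fun t hbt htT =>
    mul_le_mul (by gcongr) (rpow_le_rpow_of_nonpos hb hbt (by norm_num))
      (rpow_nonneg (hb.le.trans hbt) _) (exp_pos _).le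
  calc ∫ x, (heatKernel a (y - x) - heatKernel b (y - x)) ^ 2 * exp (2 * β * |x|)
      ≤ ∫ x, (heatKernel a (y - x) ^ 2 * exp (2 * β * |x|) +
          heatKernel b (y - x) ^ 2 * exp (2 * β * |x|)) :=
        integral_mono_of_nonneg (.of_forall fun x => by positivity) (hia.add hib)
          (.of_forall fun x => by
            dsimp only
            rw [← add_mul]
            gcongr
            nlinarith [heatKernel_nonneg (t := a) (y - x), heatKernel_nonneg (t := b) (y - x)])
    _ ≤ 2 * exp (2 * β * |y| + 2 * β ^ 2 * T) * b ^ (-(1 / 2) : ℝ) := by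
        rw [integral_add hia hib]
        linarith [(integral_heatKernel_sq_mul_exp_abs_le y hβ ha).trans (hterm a hba haT),
          (integral_heatKernel_sq_mul_exp_abs_le y hβ hb).trans (hterm b le_rfl (hba.trans haT))]

lemma integral_sq_abs_heatKernel_sub_mul_exp_abs_le (hβ : 0 ≤ β) {T α a b : ℝ} (hα₀ : 0 ≤ α)
    (hα : α ≤ 2) (hb : 0 < b) (hba : b ≤ a) (haT : a ≤ T) :
    ∫ x, |heatKernel a (y - x) - heatKernel b (y - x)| ^ 2 * exp (2 * β * |x|) ≤
      8 * exp (2 * β * |y| + 8 * β ^ 2 * T) * ((a - b) ^ α * b ^ (-(1 / 2 + α))) := by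
  have hT : 0 ≤ T := hb.le.trans (hba.trans haT)
  simp_rw [sq_abs]
  rcases le_total b (a - b) with hcrude | hfine
  · calc _ ≤ 2 * exp (2 * β * |y| + 2 * β ^ 2 * T) * b ^ (-(1 / 2) : ℝ) :=
          integral_sq_heatKernel_sub_mul_exp_abs_le y hβ hb hba haT
      _ ≤ _ := by
          gcongr
          · norm_num
          · norm_num
          · exact rpow_neg_half_le_mul_rpow hb hcrude hα₀
  · calc _ ≤ 8 * exp (2 * β * |y| + 8 * β ^ 2 * b) * ((a - b) ^ 2 * b ^ (-(5 / 2) : ℝ)) := by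
          rw [← mul_assoc]
          exact integral_sq_heatKernel_sub_mul_exp_abs_le_of_le_two_mul y hβ hb hba (by linarith)
      _ ≤ _ := by
          gcongr 8 * exp (_ + 8 * _ * ?_) * ?_
          · exact hba.trans haT
          · exact sq_mul_rpow_le_mul_rpow hb (sub_nonneg.2 hba) hfine hα

end WeightedHeatKernel

lemma intervalIntegral_le_of_le_mul_rpow_sub {f : ℝ → ℝ} {t M r : ℝ} (ht : 0 ≤ t) (hr : -1 < r)
    (hf₀ : ∀ s ∈ Set.Ioo 0 t, 0 ≤ f s) (hf : ∀ s ∈ Set.Ioo 0 t, f s ≤ M * (t - s) ^ r) :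
    ∫ s in 0..t, f s ≤ M * (t ^ (r + 1) / (r + 1)) := by
  have hg : IntervalIntegrable (fun s => M * (t - s) ^ r) volume 0 t := by
    have h := ((intervalIntegral.intervalIntegrable_rpow' hr (a := 0) (b := t)).comp_sub_left
      t).const_mul M
    rw [sub_zero, sub_self] at h
    exact h.symm
  have hval : ∫ s in 0..t, M * (t - s) ^ r = M * (t ^ (r + 1) / (r + 1)) := by
    rw [intervalIntegral.integral_const_mul, intervalIntegral.integral_comp_sub_left (· ^ r),
      sub_self, sub_zero, integral_rpow (.inl hr), zero_rpow (by linarith), sub_zero]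
  rw [← hval, intervalIntegral.integral_of_le ht, intervalIntegral.integral_of_le ht,
    integral_Ioc_eq_integral_Ioo, integral_Ioc_eq_integral_Ioo]
  exact integral_mono_of_nonneg (ae_restrict_of_forall_mem measurableSet_Ioo hf₀)
    ((intervalIntegrable_iff_integrableOn_Ioo_of_le ht).1 hg)
    (ae_restrict_of_forall_mem measurableSet_Ioo hf)

theorem heatKernel_diff_sq_time_integral_le_general (β₁ T α : ℝ) (hβ₁ : 0 < β₁)
    (hα₀ : 0 < α) (hα : α < 1 / 2) :
    ∃ K : ℝ, ∀ t₂ t₁ y : ℝ, 0 < t₂ → t₂ ≤ t₁ → t₁ ≤ T →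
      (∫ s in (0:ℝ)..t₂, ∫ x : ℝ,
          |heatKernel (t₁ - s) (y - x) - heatKernel (t₂ - s) (y - x)| ^ 2 *
            Real.exp (2 * β₁ * |x|)) ≤
        K * Real.exp (2 * β₁ * |y|) * (t₁ - t₂) ^ α := by
  refine ⟨8 * exp (8 * β₁ ^ 2 * T) * (T ^ (1 / 2 - α) / (1 / 2 - α)),
    fun t₂ t₁ y ht₂ h21 h1T => ?_⟩
  have hspace : ∀ s ∈ Set.Ioo 0 t₂, ∫ x : ℝ,
      |heatKernel (t₁ - s) (y - x) - heatKernel (t₂ - s) (y - x)| ^ 2 * exp (2 * β₁ * |x|) ≤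
        8 * exp (8 * β₁ ^ 2 * T) * exp (2 * β₁ * |y|) * (t₁ - t₂) ^ α *
          (t₂ - s) ^ (-(1 / 2 + α)) := fun s hs => by
    have h := integral_sq_abs_heatKernel_sub_mul_exp_abs_le (a := t₁ - s) (b := t₂ - s) y
      hβ₁.le hα₀.le (by linarith) (sub_pos.2 hs.2) (by linarith) (by linarith [hs.1])
    rw [sub_sub_sub_cancel_right, add_comm, exp_add] at h
    exact h.trans_eq (by ring)
  have htime := intervalIntegral_le_of_le_mul_rpow_sub ht₂.le (by linarith)
    (fun s _ => integral_nonneg fun x => by positivity) hspace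
  rw [show -(1 / 2 + α) + 1 = 1 / 2 - α by ring] at htime
  calc _ ≤ _ := htime
    _ ≤ 8 * exp (8 * β₁ ^ 2 * T) * exp (2 * β₁ * |y|) * (t₁ - t₂) ^ α *
          (T ^ (1 / 2 - α) / (1 / 2 - α)) := by
        gcongr
        linarith
    _ = _ := by ring

/-- For every `β₁ > 0`, `T > 0` and `α ∈ (0, 1/2)` there is a constant `K = K(β₁, T, α)` such
that for all `0 < t₂ ≤ t₁ ≤ T` and all `y ∈ ℝ`,
`∫_0^{t₂} ∫_ℝ |p_{t₁-s}(y-x) - p_{t₂-s}(y-x)|² e^{2β₁|x|} dx ds ≤ K e^{2β₁|y|} (t₁ - t₂)^α`. -/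
theorem heatKernel_diff_sq_time_integral_le (β₁ T α : ℝ) (hβ₁ : 0 < β₁) (hT : 0 < T)
    (hα₀ : 0 < α) (hα : α < 1 / 2) :
    ∃ K : ℝ, ∀ t₂ t₁ y : ℝ, 0 < t₂ → t₂ ≤ t₁ → t₁ ≤ T →
      (∫ s in (0:ℝ)..t₂, ∫ x : ℝ,
          |heatKernel (t₁ - s) (y - x) - heatKernel (t₂ - s) (y - x)| ^ 2 *
            Real.exp (2 * β₁ * |x|)) ≤
        K * Real.exp (2 * β₁ * |y|) * (t₁ - t₂) ^ α :=
  heatKernel_diff_sq_time_integral_le_general β₁ T α hβ₁ hα₀ hα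
end
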